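/- arXiv:0901.1742 — 5 statements merged into one kernel-verified Lean document; each statement's English description precedes it below -/
import Mathlib

section
/- Let f : A → B be a homomorphism of commutative rings, J an ideal of B, and I an ideal of A. Then the set I⋈^f J := {(i, f(i)+j) : i ∈ I, j ∈ J} is an ideal of the ring A⋈^f J, and the quotient ring (A⋈^f J)/(I⋈^f J) is isomorphic to A/I. -/
/-- The amalgamation `A ⋈^f J = {(a, f a + j) | a ∈ A, j ∈ J}` of `A` with `B`
along the ideal `J` of `B`, with respect to the ring homomorphism `f : A → B`,
as a subring of the product ring `A × B`. -/
def amalgamation {A B : Type*} [CommRing A] [CommRing B] (f : A →+* B) (J : Ideal B) :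
    Subring (A × B) where
  carrier := {x : A × B | ∃ a : A, ∃ j ∈ J, x = (a, f a + j)}
  one_mem' := ⟨1, 0, J.zero_mem, by simp [Prod.ext_iff]⟩
  zero_mem' := ⟨0, 0, J.zero_mem, by simp [Prod.ext_iff]⟩
  mul_mem' := by
    rintro x y ⟨a, j, hj, rfl⟩ ⟨c, k, hk, rfl⟩
    refine ⟨a * c, f a * k + j * f c + j * k,
      J.add_mem (J.add_mem (J.mul_mem_left _ hk) (J.mul_mem_right _ hj)) (J.mul_mem_right _ hj),
      ?_⟩
    simp only [Prod.mk_mul_mk, map_mul, Prod.mk.injEq]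
    exact ⟨trivial, by ring⟩
  add_mem' := by
    rintro x y ⟨a, j, hj, rfl⟩ ⟨c, k, hk, rfl⟩
    refine ⟨a + c, j + k, J.add_mem hj hk, ?_⟩
    simp only [Prod.mk_add_mk, map_add, Prod.mk.injEq]
    exact ⟨trivial, by ring⟩
  neg_mem' := by
    rintro x ⟨a, j, hj, rfl⟩
    refine ⟨-a, -j, J.neg_mem hj, ?_⟩
    simp only [Prod.neg_mk, map_neg, Prod.mk.injEq]
    exact ⟨trivial, by ring⟩

/-! The first projection `A ⋈^f J → A` is a surjective ring homomorphism (`a ↦ (a, f a)` is a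
section), and `I ⋈^f J` is the preimage of `I` under it; hence the quotient by `I ⋈^f J` is `A ⧸ I`. -/

noncomputable def Ideal.quotientComapEquivOfSurjective {R S : Type*} [CommRing R] [CommRing S]
    {g : R →+* S} (hg : Function.Surjective g) (I : Ideal S) : R ⧸ I.comap g ≃+* S ⧸ I :=
  (Ideal.quotEquivOfEq (by rw [← RingHom.comap_ker, Ideal.mk_ker])).trans
    (RingHom.quotientKerEquivOfSurjective (f := (Ideal.Quotient.mk I).comp g)
      (Ideal.Quotient.mk_surjective.comp hg))

namespace amalgamation

variable {A B : Type*} [CommRing A] [CommRing B] (f : A →+* B) (J : Ideal B)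

def fst : amalgamation f J →+* A :=
  (RingHom.fst A B).comp (amalgamation f J).subtype

theorem fst_surjective : Function.Surjective (fst f J) :=
  fun a => ⟨⟨(a, f a), a, 0, J.zero_mem, by simp⟩, rfl⟩

theorem mem_comap_fst_iff (I : Ideal A) (x : amalgamation f J) :
    x ∈ I.comap (fst f J) ↔ ∃ i ∈ I, ∃ j ∈ J, (x : A × B) = (i, f i + j) := by
  obtain ⟨a, j, hj, hx⟩ := x.2
  have hfst : fst f J x = a := by simp [fst, hx]
  rw [Ideal.mem_comap, hfst]
  constructor
  · exact fun ha => ⟨a, ha, j, hj, hx⟩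
  · rintro ⟨i, hi, k, -, hxi⟩
    rw [hx, Prod.mk.injEq] at hxi
    exact hxi.1 ▸ hi

end amalgamation

theorem statement1 {A B : Type*} [CommRing A] [CommRing B] (f : A →+* B) (J : Ideal B)
    (I : Ideal A) :
    ∃ K : Ideal ↥(amalgamation f J),
      (∀ x : amalgamation f J,
        x ∈ K ↔ ∃ i ∈ I, ∃ j ∈ J, (x : A × B) = (i, f i + j)) ∧
      Nonempty ((↥(amalgamation f J) ⧸ K) ≃+* (A ⧸ I)) :=
  ⟨I.comap (amalgamation.fst f J), amalgamation.mem_comap_fst_iff f J I,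
    ⟨Ideal.quotientComapEquivOfSurjective (amalgamation.fst_surjective f J) I⟩⟩
end

section
/- Let f : A → B be a homomorphism of commutative rings and J a radical ideal of B (i.e., J equals its own radical). If the ring A⋈^f J is reduced, then B is reduced (and A is reduced). -/
/-!
`A` embeds into `A ⋈^f J` by `a ↦ (a, f a)`, so it inherits reducedness. A nilpotent `b ∈ B`
lies in the radical ideal `J`, hence `(0, b)` is a nilpotent element of `A ⋈^f J`, so `b = 0`.
-/

theorem Subring.eq_zero_of_isNilpotent_of_mem {R : Type*} [Ring R] {S : Subring R}
    [IsReduced S] {x : R} (hx : x ∈ S) (hnil : IsNilpotent x) : x = 0 := by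
  have hnil' : IsNilpotent (S.subtype ⟨x, hx⟩) := hnil
  exact congrArg Subtype.val ((IsNilpotent.map_iff S.subtype_injective).mp hnil').eq_zero

theorem Prod.isNilpotent_zero_mk {R S : Type*} [MonoidWithZero R] [MonoidWithZero S] {s : S}
    (hs : IsNilpotent s) : IsNilpotent ((0 : R), s) := by
  obtain ⟨n, hn⟩ := hs
  refine ⟨n + 1, ?_⟩
  rw [Prod.pow_mk, zero_pow n.succ_ne_zero, pow_succ, hn, zero_mul, Prod.mk_zero_zero]

namespace amalgamation

variable {A B : Type*} [CommRing A] [CommRing B] (f : A →+* B) (J : Ideal B)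

theorem mk_mem {a : A} {j : B} (hj : j ∈ J) : (a, f a + j) ∈ amalgamation f J :=
  ⟨a, j, hj, rfl⟩

def diag : A →+* amalgamation f J :=
  ((RingHom.id A).prod f).codRestrict (amalgamation f J) fun a => by
    simpa using mk_mem f J (a := a) J.zero_mem

theorem diag_injective : Function.Injective (diag f J) :=
  fun _ _ h => congrArg (fun x : amalgamation f J => x.1.1) h

theorem isReduced_left [IsReduced (amalgamation f J)] : IsReduced A :=
  isReduced_of_injective (diag f J) (diag_injective f J)

theorem eq_zero_of_isNilpotent_of_mem_ideal [IsReduced (amalgamation f J)] {j : B}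
    (hj : j ∈ J) (hnil : IsNilpotent j) : j = 0 := by
  have hmem : ((0 : A), j) ∈ amalgamation f J := by simpa using mk_mem f J (a := 0) hj
  exact congrArg Prod.snd
    (Subring.eq_zero_of_isNilpotent_of_mem hmem (Prod.isNilpotent_zero_mk hnil))

end amalgamation

theorem statement6 {A B : Type*} [CommRing A] [CommRing B] (f : A →+* B) (J : Ideal B)
    (hJ : J.radical = J) (hred : IsReduced ↥(amalgamation f J)) :
    IsReduced B ∧ IsReduced A := by
  refine ⟨⟨fun b hb => ?_⟩, amalgamation.isReduced_left f J⟩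
  obtain ⟨n, hn⟩ := hb
  have hbJ : b ∈ J := hJ ▸ ⟨n, hn ▸ J.zero_mem⟩
  exact amalgamation.eq_zero_of_isNilpotent_of_mem_ideal f J hbJ ⟨n, hn⟩
end

section
/- Let A ⊆ B be an extension of commutative rings and let X₁, …, Xₙ be finitely many indeterminates over B. Then the subring A + (X₁,…,Xₙ)B[X₁,…,Xₙ] = {h ∈ B[X₁,…,Xₙ] : h(0,…,0) ∈ A} of the polynomial ring B[X₁,…,Xₙ] is a Noetherian ring if and only if A is a Noetherian ring and B is finitely generated as an A-module. -/
/-!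
The constant-coefficient map is a surjection `A + (X)B[X] → A`, so Noetherianity passes to `A`.
Its kernel `(X)B[X]` is a finitely generated ideal, and the coefficient of `Xᵢ` maps it onto `B`
linearly over `A + (X)B[X]` acting on `B` through its constant term; hence `B` is a finite
`A`-module. Conversely, if `B` is a finite `A`-module then `B[X]` is a finite `A[X]`-module, and
`A + (X)B[X]`, sitting between `A[X]` and `B[X]`, is a finite algebra over the Noetherian ring
`A[X]`.
-/

open MvPolynomial

attribute [local instance] MvPolynomial.algebraMvPolynomial in
theorem Module.Finite.mvPolynomial (σ R S : Type*) [CommRing R] [CommRing S] [Algebra R S]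
    [Module.Finite R S] : Module.Finite (MvPolynomial σ R) (MvPolynomial σ S) :=
  .equiv (Algebra.IsPushout.out (R := R) (S := MvPolynomial σ R) (R' := S)).equiv

theorem Subring.isNoetherianRing_of_range_le {R S : Type*} [CommRing R] [CommRing S]
    [Algebra R S] [IsNoetherianRing R] [Module.Finite R S] (T : Subring S)
    (hT : (algebraMap R S).range ≤ T) : IsNoetherianRing T := by
  let T' : Subalgebra R S := { T with algebraMap_mem' := fun r => hT ⟨r, rfl⟩ }
  have : Module.Finite R T' :=
    .of_injective (Subalgebra.val T').toLinearMap Subtype.val_injective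
  exact IsNoetherianRing.of_finite R T'

namespace MvPolynomial

theorem coeff_single_one_mul {σ B : Type*} [CommRing B] (i : σ) (p q : MvPolynomial σ B)
    (hq : constantCoeff q = 0) :
    coeff (Finsupp.single i 1) (p * q) = constantCoeff p * coeff (Finsupp.single i 1) q := by
  classical
  rw [constantCoeff_eq] at hq
  rw [coeff_mul, Finsupp.antidiagonal_single, Finset.sum_map, Finset.Nat.antidiagonal_succ]
  simp [hq, constantCoeff_eq]

variable (σ : Type*) {B : Type*} [CommRing B] (A : Subring B)

noncomputable abbrev constCoeffSubring : Subring (MvPolynomial σ B) := A.comap constantCoeff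

noncomputable def constantCoeffRestrict : constCoeffSubring σ A →+* A :=
  (constantCoeff.comp (constCoeffSubring σ A).subtype).codRestrict A fun p => p.2

variable {σ A}

theorem mem_ker_constantCoeffRestrict {p : constCoeffSubring σ A} :
    p ∈ RingHom.ker (constantCoeffRestrict σ A) ↔ constantCoeff (p : MvPolynomial σ B) = 0 := by
  rw [RingHom.mem_ker, ← Subtype.coe_inj]
  rfl

theorem constantCoeffRestrict_surjective : Function.Surjective (constantCoeffRestrict σ A) :=
  fun a => ⟨⟨C a, by simp⟩, Subtype.ext (constantCoeff_C _ _)⟩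

theorem finite_of_isNoetherianRing_constCoeffSubring (i : σ)
    [IsNoetherianRing (constCoeffSubring σ A)] : Module.Finite A B := by
  let π := constantCoeffRestrict σ A
  let _ : Algebra (constCoeffSubring σ A) A := π.toAlgebra
  let _ : Algebra (constCoeffSubring σ A) B := ((algebraMap A B).comp π).toAlgebra
  have : IsScalarTower (constCoeffSubring σ A) A B := .of_algebraMap_eq fun _ => rfl
  let coeffXi : RingHom.ker π →ₗ[constCoeffSubring σ A] B :=
    { toFun := fun p => coeff (Finsupp.single i 1) (p : MvPolynomial σ B)
      map_add' := fun p q => coeff_add _ _ _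
      map_smul' := fun t p =>
        coeff_single_one_mul i _ _ (mem_ker_constantCoeffRestrict.mp p.2) }
  have hsurj : Function.Surjective coeffXi := fun b =>
    ⟨⟨⟨C b * X i, by simp⟩, mem_ker_constantCoeffRestrict.mpr (by simp)⟩, by
      show coeff _ (C b * X i) = b
      simp⟩
  have : Module.Finite (constCoeffSubring σ A) B := .of_surjective coeffXi hsurj
  exact .of_restrictScalars_finite (constCoeffSubring σ A) A B

attribute [local instance] algebraMvPolynomial in
theorem isNoetherianRing_constCoeffSubring [Finite σ] [IsNoetherianRing A] [Module.Finite A B] :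
    IsNoetherianRing (constCoeffSubring σ A) := by
  have := Module.Finite.mvPolynomial σ A B
  refine (constCoeffSubring σ A).isNoetherianRing_of_range_le (R := MvPolynomial σ A) ?_
  rintro _ ⟨p, rfl⟩
  show constantCoeff (map _ p) ∈ A
  rw [constantCoeff_map]
  exact (constantCoeff p).2

theorem isNoetherianRing_constCoeffSubring_iff [Finite σ] [Nonempty σ] :
    IsNoetherianRing (constCoeffSubring σ A) ↔ IsNoetherianRing A ∧ Module.Finite A B :=
  ⟨fun _ => ⟨isNoetherianRing_of_surjective _ _ _ (constantCoeffRestrict_surjective (σ := σ)),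
      finite_of_isNoetherianRing_constCoeffSubring (Classical.arbitrary σ)⟩,
    fun ⟨_, _⟩ => isNoetherianRing_constCoeffSubring⟩

end MvPolynomial

theorem statement11 {B : Type*} [CommRing B] (A : Subring B) (n : ℕ) (hn : 0 < n) :
    IsNoetherianRing
        ↥(A.comap (MvPolynomial.constantCoeff : MvPolynomial (Fin n) B →+* B)) ↔
      IsNoetherianRing A ∧ Module.Finite A B :=
  have : Nonempty (Fin n) := ⟨⟨0, hn⟩⟩
  isNoetherianRing_constCoeffSubring_iff
end

section
/- Let A ⊆ B be an extension of commutative rings, J an ideal of B, and X₁, …, X_r finitely many indeterminates over B. Consider the subring R := A + (X₁,…,X_r)J[X₁,…,X_r] of B[X₁,…,X_r], consisting of those polynomials whose constant term lies in A and all of whose other coefficients lie in J. Then R is a Noetherian ring if and only if A is a Noetherian ring, J is an idempotent ideal of B (J² = J), and J is finitely generated as an A-module. -/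
/-- The subring `A + (X₁,…,X_r)J[X₁,…,X_r]` of `B[X₁,…,X_r]`: polynomials whose
constant term lies in the subring `A` and all of whose other coefficients lie in
the ideal `J` of `B`. -/
def polyAmalg {B : Type*} [CommRing B] (A : Subring B) (J : Ideal B) (r : ℕ) :
    Subring (MvPolynomial (Fin r) B) where
  carrier := {h | h.coeff 0 ∈ A ∧ ∀ m : Fin r →₀ ℕ, m ≠ 0 → h.coeff m ∈ J}
  one_mem' := by
    refine ⟨by simp only [MvPolynomial.coeff_zero_one]; exact A.one_mem, fun m hm => ?_⟩
    rw [MvPolynomial.coeff_one, if_neg (fun h => hm h.symm)]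
    exact J.zero_mem
  zero_mem' := ⟨by rw [MvPolynomial.coeff_zero]; exact A.zero_mem, fun m _ => by simp⟩
  mul_mem' := by
    rintro p q ⟨hp0, hp⟩ ⟨hq0, hq⟩
    constructor
    · rw [MvPolynomial.coeff_mul, Finsupp.antidiagonal_zero, Finset.sum_singleton]
      exact A.mul_mem hp0 hq0
    · intro m hm
      rw [MvPolynomial.coeff_mul]
      refine Ideal.sum_mem J ?_
      rintro ⟨m₁, m₂⟩ hmem
      rw [Finset.HasAntidiagonal.mem_antidiagonal] at hmem
      by_cases h₁ : m₁ = 0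
      · have h₂ : m₂ ≠ 0 := by
          intro h₂; exact hm (by rw [← hmem, h₁, h₂, add_zero])
        exact Ideal.mul_mem_left J _ (hq m₂ h₂)
      · exact Ideal.mul_mem_right _ J (hp m₁ h₁)
  add_mem' := by
    rintro p q ⟨hp0, hp⟩ ⟨hq0, hq⟩
    exact ⟨by rw [MvPolynomial.coeff_add]; exact A.add_mem hp0 hq0,
      fun m hm => by rw [MvPolynomial.coeff_add]; exact J.add_mem (hp m hm) (hq m hm)⟩
  neg_mem' := by
    rintro p ⟨hp0, hp⟩
    exact ⟨by rw [MvPolynomial.coeff_neg]; exact A.neg_mem hp0,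
      fun m hm => by rw [MvPolynomial.coeff_neg]; exact J.neg_mem (hp m hm)⟩

/-! If `R` is Noetherian, `A` is a quotient of `R` by the constant term, and the kernel of the
constant term is a finitely generated ideal; the coefficient of `X i` is semilinear on it over
the constant term, with image `J`, so `J` is a finitely generated `A`-module. Modulo `J²`
every coefficient of an element of that kernel is semilinear over the constant term, so the
stabilising chain of ideals generated by `a X_i, a X_i², …` forces `a ∈ J²`.

Conversely, a finitely generated idempotent ideal contains an `e` acting as the identity on `J`,
so `x X^m = (e X_i) (x X^(m - e_i))`; hence `R` is generated as an `A`-algebra by the finitely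
many `e X_i` and `s X_i`, for `s` running over `A`-generators of `J`, and Hilbert's basis
theorem applies. -/

open MvPolynomial Finsupp

theorem MvPolynomial.coeff_single_one_mul_of_coeff_zero_eq_zero {σ R : Type*} [CommSemiring R]
    (i : σ) (p : MvPolynomial σ R) {q : MvPolynomial σ R} (hq : q.coeff 0 = 0) :
    (p * q).coeff (single i 1) = p.coeff 0 * q.coeff (single i 1) := by
  classical
  rw [coeff_mul, antidiagonal_single, Finset.sum_map]
  simp [Finset.Nat.antidiagonal_succ, hq]

theorem IsNoetherian.exists_le_partialSups {R M : Type*} [Semiring R] [AddCommMonoid M]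
    [Module R M] [IsNoetherian R M] (f : ℕ → Submodule R M) :
    ∃ n, f (n + 1) ≤ partialSups f n := by
  obtain ⟨n, hn⟩ := monotone_stabilizes_iff_noetherian.mpr ‹_› (partialSups f)
  exact ⟨n, (hn (n + 1) n.le_succ).symm ▸ le_partialSups f (n + 1)⟩

noncomputable section

namespace polyAmalg

variable {B : Type*} [CommRing B] {A : Subring B} {J : Ideal B} {r : ℕ}

theorem coeff_zero_mem (f : polyAmalg A J r) : (f : MvPolynomial (Fin r) B).coeff 0 ∈ A :=
  f.2.1

theorem coeff_mem (f : polyAmalg A J r) {m : Fin r →₀ ℕ} (hm : m ≠ 0) :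
    (f : MvPolynomial (Fin r) B).coeff m ∈ J :=
  f.2.2 m hm

theorem C_mem {a : B} (ha : a ∈ A) : C a ∈ polyAmalg A J r :=
  ⟨by simpa using ha, fun m hm => by simp [coeff_C, Ne.symm hm]⟩

theorem monomial_mem {m : Fin r →₀ ℕ} (hm : m ≠ 0) {b : B} (hb : b ∈ J) :
    monomial m b ∈ polyAmalg A J r :=
  ⟨by simp [coeff_monomial, hm], fun m' _ => by
    rw [coeff_monomial]; split_ifs <;> simp [hb]⟩

variable (A J r)

def constTerm : polyAmalg A J r →+* A :=
  (constantCoeff.comp (polyAmalg A J r).subtype).codRestrict A coeff_zero_mem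

theorem constTerm_surjective : Function.Surjective (constTerm A J r) :=
  fun a => ⟨⟨C a, C_mem a.2⟩, Subtype.ext (constantCoeff_C _ _)⟩

instance : RingHomSurjective (constTerm A J r) :=
  ⟨constTerm_surjective A J r⟩

theorem isNoetherianRing_subring [IsNoetherianRing (polyAmalg A J r)] : IsNoetherianRing A :=
  isNoetherianRing_of_surjective _ _ (constTerm A J r) (constTerm_surjective A J r)

variable {A J r} in
theorem mem_ker_constTerm {f : polyAmalg A J r} :
    f ∈ RingHom.ker (constTerm A J r) ↔ (f : MvPolynomial (Fin r) B).coeff 0 = 0 := by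
  rw [RingHom.mem_ker, Subtype.ext_iff]
  rfl

def coeffSingleOne (i : Fin r) : RingHom.ker (constTerm A J r) →ₛₗ[constTerm A J r] B where
  toFun f := ((f : polyAmalg A J r) : MvPolynomial (Fin r) B).coeff (single i 1)
  map_add' _ _ := coeff_add _ _ _
  map_smul' _ f :=
    coeff_single_one_mul_of_coeff_zero_eq_zero i _ (mem_ker_constTerm.1 f.2)

theorem range_coeffSingleOne (i : Fin r) :
    LinearMap.range (coeffSingleOne A J r i) = J.restrictScalars A := by
  ext b
  refine ⟨?_, fun hb => ?_⟩
  · rintro ⟨f, rfl⟩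
    exact coeff_mem f.1 (by simp)
  · refine ⟨⟨⟨monomial (single i 1) b, monomial_mem (by simp) hb⟩, ?_⟩, ?_⟩
    · exact mem_ker_constTerm.2 (by simp [coeff_monomial])
    · exact (coeff_monomial _ _ _).trans (if_pos rfl)

theorem fg_of_isNoetherianRing [IsNoetherianRing (polyAmalg A J r)] (i : Fin r) :
    (J.restrictScalars A).FG :=
  range_coeffSingleOne A J r i ▸ Submodule.fg_range _

/-- An ideal because, for `f` without constant term, every term of `(c * f).coeff m` other than
`c.coeff 0 * f.coeff m` is a product of two coefficients in `J`. -/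
def coeffMemSqIdeal (m : Fin r →₀ ℕ) : Ideal (polyAmalg A J r) where
  carrier := {f | (f : MvPolynomial (Fin r) B).coeff 0 = 0 ∧
    (f : MvPolynomial (Fin r) B).coeff m ∈ J * J}
  zero_mem' := by simp
  add_mem' {f g} hf hg := by simp [hf.1, hg.1, Ideal.add_mem _ hf.2 hg.2]
  smul_mem' c f hf := by
    refine ⟨by simp [coeff_mul, hf.1], ?_⟩
    simp only [smul_eq_mul, Subring.coe_mul, coeff_mul]
    refine Ideal.sum_mem _ fun ⟨m₁, m₂⟩ hm => ?_
    rw [Finset.HasAntidiagonal.mem_antidiagonal] at hm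
    rcases eq_or_ne m₂ 0 with rfl | h₂
    · simp [hf.1]
    rcases eq_or_ne m₁ 0 with rfl | h₁
    · rw [zero_add] at hm
      exact hm ▸ Ideal.mul_mem_left _ _ hf.2
    · exact Ideal.mul_mem_mul (coeff_mem c h₁) (coeff_mem f h₂)

theorem mul_self_eq_of_isNoetherianRing [IsNoetherianRing (polyAmalg A J r)] (i : Fin r) :
    J * J = J := by
  refine le_antisymm Ideal.mul_le_left fun a ha => ?_
  let p (k : ℕ) : polyAmalg A J r :=
    ⟨monomial (single i (k + 1)) a, monomial_mem (by simp) ha⟩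
  obtain ⟨n, hn⟩ := IsNoetherian.exists_le_partialSups fun k => Ideal.span {p k}
  have hp : p (n + 1) ∈ coeffMemSqIdeal A J r (single i (n + 1 + 1)) := by
    refine (hn.trans (partialSups_le _ _ _ fun k hk => ?_)) (Ideal.mem_span_singleton_self _)
    rw [Ideal.span_singleton_le_iff_mem]
    refine ⟨by simp [p, coeff_monomial], ?_⟩
    have hne : single i (k + 1) ≠ single i (n + 1 + 1) :=
      (single_injective i).ne (by omega)
    simpa only [p, coeff_monomial, hne, if_false] using zero_mem _
  simpa only [p, coeff_monomial, if_true] using hp.2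

def toSubalgebra : Subalgebra A (MvPolynomial (Fin r) B) :=
  { polyAmalg A J r with algebraMap_mem' := fun a => C_mem a.2 }

variable {A J r}

theorem monomial_mem_adjoin {e : B} (heJ : e ∈ J) (he : ∀ x ∈ J, e * x = x) {s : Set B}
    (hs : Submodule.span A s = J.restrictScalars A) {m : Fin r →₀ ℕ} (hm : m ≠ 0) {x : B}
    (hx : x ∈ J) :
    monomial m x ∈ Algebra.adjoin A (⋃ i, monomial (single i 1) '' insert e s) := by
  set S := Algebra.adjoin A (⋃ i, monomial (single i 1) '' insert e s)
  have hdeg_one (i : Fin r) {x : B} (hx : x ∈ J) : monomial (single i 1) x ∈ S := by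
    suffices J.restrictScalars A ≤
        (Subalgebra.toSubmodule S).comap ((monomial (single i 1)).restrictScalars A) from this hx
    rw [← hs, Submodule.span_le]
    exact fun y hy =>
      Algebra.subset_adjoin (Set.mem_iUnion.2 ⟨i, y, Set.mem_insert_of_mem _ hy, rfl⟩)
  induction m using WellFoundedLT.induction generalizing x with
  | _ m ih =>
  obtain ⟨i, hi⟩ : ∃ i, m i ≠ 0 := by simpa [Finsupp.ext_iff] using hm
  obtain ⟨m', rfl⟩ := exists_add_of_le (single_le_iff.2 (Nat.one_le_iff_ne_zero.2 hi))
  rcases eq_or_ne m' 0 with rfl | hm'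
  · simpa using hdeg_one i hx
  rw [← he x hx, ← monomial_mul]
  have hlt : m' < single i 1 + m' := lt_add_of_pos_left _ (pos_iff_ne_zero.2 (by simp))
  exact mul_mem (hdeg_one i heJ) (ih m' hlt hm' hx)

theorem toSubalgebra_fg (hJ : J * J = J) (hfg : (J.restrictScalars A).FG) :
    (toSubalgebra A J r).FG := by
  obtain ⟨e, heJ, he⟩ := Submodule.exists_mem_and_smul_eq_self_of_fg_of_le_smul J J
    (hfg.of_restrictScalars A) hJ.ge
  obtain ⟨s, hs⟩ := hfg
  have hsJ : (s : Set B) ⊆ J.restrictScalars A := hs ▸ Submodule.subset_span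
  refine (Subalgebra.fg_def).2 ⟨⋃ i : Fin r, monomial (single i 1) '' insert e (s : Set B),
    Set.finite_iUnion fun i => (s.finite_toSet.insert e).image _,
    le_antisymm (Algebra.adjoin_le ?_) fun f hf => ?_⟩
  · rintro _ ⟨_, ⟨i, rfl⟩, x, hx, rfl⟩
    exact monomial_mem (by simp) (Set.insert_subset heJ hsJ hx)
  · rw [f.as_sum]
    refine sum_mem fun m _ => ?_
    rcases eq_or_ne m 0 with rfl | hm
    · exact Subalgebra.algebraMap_mem _ (⟨_, hf.1⟩ : A)
    · exact monomial_mem_adjoin heJ he hs hm (hf.2 m hm)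

theorem isNoetherianRing_of_fg [IsNoetherianRing A] (hJ : J * J = J)
    (hfg : (J.restrictScalars A).FG) : IsNoetherianRing (polyAmalg A J r) :=
  have := (Subalgebra.fg_iff_finiteType _).1 (toSubalgebra_fg (r := r) hJ hfg)
  Algebra.FiniteType.isNoetherianRing A (toSubalgebra A J r)

end polyAmalg

end

theorem statement13 {B : Type*} [CommRing B] (A : Subring B) (J : Ideal B) (r : ℕ)
    (hr : 0 < r) :
    IsNoetherianRing ↥(polyAmalg A J r) ↔
      IsNoetherianRing A ∧ J * J = J ∧ (Submodule.restrictScalars A J).FG := by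
  constructor
  · intro _
    exact ⟨polyAmalg.isNoetherianRing_subring A J r,
      polyAmalg.mul_self_eq_of_isNoetherianRing A J r ⟨0, hr⟩,
      polyAmalg.fg_of_isNoetherianRing A J r ⟨0, hr⟩⟩
  · rintro ⟨_, hJ, hfg⟩
    exact polyAmalg.isNoetherianRing_of_fg hJ hfg
end

section
/- Let α : A → C and β : B → C be homomorphisms of commutative rings and let D := α ×_C β be their pullback. Then: (1) if D is a reduced ring, then Nilp(A) ∩ Ker(α) = {0} and Nilp(B) ∩ Ker(β) = {0}; (2) if either (a) A is reduced and Nilp(B) ∩ Ker(β) = {0}, or (b) B is reduced and Nilp(A) ∩ Ker(α) = {0}, then D is reduced. Here Nilp denotes the set of nilpotent elements. -/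
/-- The pullback (fiber product) `α ×_C β = {(a, b) ∈ A × B | α a = β b}` of two
ring homomorphisms `α : A → C` and `β : B → C`, as a subring of `A × B`. -/
def pullbackSubring {A B C : Type*} [CommRing A] [CommRing B] [CommRing C]
    (α : A →+* C) (β : B →+* C) : Subring (A × B) where
  carrier := {x : A × B | α x.1 = β x.2}
  one_mem' := by simp
  zero_mem' := by simp
  mul_mem' := by
    intro x y hx hy
    simp only [Set.mem_setOf_eq, Prod.fst_mul, Prod.snd_mul, map_mul] at *
    rw [hx, hy]
  add_mem' := by
    intro x y hx hy
    simp only [Set.mem_setOf_eq, Prod.fst_add, Prod.snd_add, map_add] at *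
    rw [hx, hy]
  neg_mem' := by
    intro x hx
    simp only [Set.mem_setOf_eq, Prod.fst_neg, Prod.snd_neg, map_neg] at *
    rw [hx]

theorem statement17 {A B C : Type*} [CommRing A] [CommRing B] [CommRing C]
    (α : A →+* C) (β : B →+* C) :
    (IsReduced ↥(pullbackSubring α β) →
      nilradical A ⊓ RingHom.ker α = ⊥ ∧ nilradical B ⊓ RingHom.ker β = ⊥) ∧
    ((IsReduced A ∧ nilradical B ⊓ RingHom.ker β = ⊥) ∨
        (IsReduced B ∧ nilradical A ⊓ RingHom.ker α = ⊥) →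
      IsReduced ↥(pullbackSubring α β)) := by
  constructor
  · intro hD
    constructor
    · rw [eq_bot_iff]
      rintro a ⟨ha, hka⟩
      obtain ⟨n, hn⟩ := mem_nilradical.mp ha
      have hmem : ((a, 0) : A × B) ∈ pullbackSubring α β := by
        show α a = β 0
        simp [RingHom.mem_ker.mp hka]
      have hnil : IsNilpotent (⟨(a, 0), hmem⟩ : ↥(pullbackSubring α β)) := by
        refine ⟨n + 1, ?_⟩
        ext
        · show a ^ (n + 1) = 0
          rw [pow_succ, hn, zero_mul]
        · show (0 : B) ^ (n + 1) = 0
          simp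
      have h0 := hD.eq_zero _ hnil
      have h1 := Subtype.ext_iff.mp h0
      simp only [Prod.ext_iff] at h1
      simpa using h1.1
    · rw [eq_bot_iff]
      rintro b ⟨hb, hkb⟩
      obtain ⟨n, hn⟩ := mem_nilradical.mp hb
      have hmem : ((0, b) : A × B) ∈ pullbackSubring α β := by
        show α 0 = β b
        simp [RingHom.mem_ker.mp hkb]
      have hnil : IsNilpotent (⟨(0, b), hmem⟩ : ↥(pullbackSubring α β)) := by
        refine ⟨n + 1, ?_⟩
        ext
        · show (0 : A) ^ (n + 1) = 0
          simp
        · show b ^ (n + 1) = 0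
          rw [pow_succ, hn, zero_mul]
      have h0 := hD.eq_zero _ hnil
      have h1 := Subtype.ext_iff.mp h0
      simp only [Prod.ext_iff] at h1
      simpa using h1.2
  · rintro (⟨hA, hB⟩ | ⟨hB, hA⟩)
    · constructor
      rintro ⟨⟨a, b⟩, hmem⟩ ⟨n, hn⟩
      have hn' : ((a, b) : A × B) ^ n = 0 := by
        have := Subtype.ext_iff.mp hn
        simpa using this
      have hna : a ^ n = 0 := congrArg Prod.fst hn'
      have hnb : b ^ n = 0 := congrArg Prod.snd hn'
      have hab : α a = β b := hmem
      have ha0 : a = 0 := hA.eq_zero a ⟨n, hna⟩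
      have hb0 : b = 0 := by
        have hmem' : b ∈ nilradical B ⊓ RingHom.ker β := by
          refine ⟨mem_nilradical.mpr ⟨n, hnb⟩, RingHom.mem_ker.mpr ?_⟩
          rw [← hab, ha0, map_zero]
        rw [hB] at hmem'
        simpa using hmem'
      apply Subtype.ext
      simp [ha0, hb0]
    · constructor
      rintro ⟨⟨a, b⟩, hmem⟩ ⟨n, hn⟩
      have hn' : ((a, b) : A × B) ^ n = 0 := by
        have := Subtype.ext_iff.mp hn
        simpa using this
      have hna : a ^ n = 0 := congrArg Prod.fst hn'
      have hnb : b ^ n = 0 := congrArg Prod.snd hn'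
      have hab : α a = β b := hmem
      have hb0 : b = 0 := hB.eq_zero b ⟨n, hnb⟩
      have ha0 : a = 0 := by
        have hmem' : a ∈ nilradical A ⊓ RingHom.ker α := by
          refine ⟨mem_nilradical.mpr ⟨n, hna⟩, RingHom.mem_ker.mpr ?_⟩
          rw [hab, hb0, map_zero]
        rw [hA] at hmem'
        simpa using hmem'
      apply Subtype.ext
      simp [ha0, hb0]
end
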